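/- arXiv:2603.29102 — 2 statements merged into one kernel-verified Lean document; each statement's English description precedes it below -/
import Mathlib

section
/- Variational information maximization bound (Theorem 2, Barber–Agakov bound): Let X and Y be random variables taking values in finite nonempty sets 𝒳 and 𝒴 on a common probability space, with joint probability mass function p(x, y). Let q : 𝒳 × 𝒴 → [0, 1] be any conditional probability mass function, i.e., Σ_x q(x | y) = 1 for every y ∈ 𝒴, and suppose q(x | y) > 0 whenever p(x, y) > 0. Then I(X; Y) ≥ Σ_{x,y} p(x, y) log q(x | y) + H(X). -/
open MeasureTheory

/-- Probability that the random variable `X` takes the value `x`. -/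
noncomputable def pr {Ω α : Type*} [MeasurableSpace Ω] (μ : Measure Ω)
    (X : Ω → α) (x : α) : ℝ :=
  (μ {ω | X ω = x}).toReal

/-- Joint probability that `X = x` and `Y = y`. -/
noncomputable def jpr {Ω α β : Type*} [MeasurableSpace Ω] (μ : Measure Ω)
    (X : Ω → α) (Y : Ω → β) (x : α) (y : β) : ℝ :=
  (μ {ω | X ω = x ∧ Y ω = y}).toReal

/-- Shannon entropy `H(X) = -∑ₓ P(X=x) log P(X=x)` (note `Real.log 0 = 0`). -/
noncomputable def entropy {Ω α : Type*} [MeasurableSpace Ω] [Fintype α]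
    (μ : Measure Ω) (X : Ω → α) : ℝ :=
  -∑ x, pr μ X x * Real.log (pr μ X x)

/-- Conditional entropy `H(X|Y) = -∑_{x,y} P(X=x,Y=y) log P(X=x|Y=y)`,
with `P(X=x|Y=y) = P(X=x,Y=y)/P(Y=y)` (and `0/0 = 0`, `Real.log 0 = 0`). -/
noncomputable def condEntropy {Ω α β : Type*} [MeasurableSpace Ω] [Fintype α] [Fintype β]
    (μ : Measure Ω) (X : Ω → α) (Y : Ω → β) : ℝ :=
  -∑ x, ∑ y, jpr μ X Y x y * Real.log (jpr μ X Y x y / pr μ Y y)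

/-- Mutual information `I(X;Y) = H(X) - H(X|Y)`. -/
noncomputable def mutualInfo {Ω α β : Type*} [MeasurableSpace Ω] [Fintype α] [Fintype β]
    (μ : Measure Ω) (X : Ω → α) (Y : Ω → β) : ℝ :=
  entropy μ X - condEntropy μ X Y

lemma barber_log_aux {p py q : ℝ} (hp : 0 ≤ p) (hppy : p ≤ py) (hq : 0 ≤ q)
    (hqp : 0 < p → 0 < q) :
    p * Real.log q - p * Real.log (p / py) ≤ q * py - p := by
  rcases eq_or_lt_of_le hp with h | h
  · have hpy : 0 ≤ py := hp.trans hppy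
    simp [← h]
    positivity
  · have hq' := hqp h
    have hpy : 0 < py := lt_of_lt_of_le h hppy
    have key : Real.log (q * py / p) ≤ q * py / p - 1 :=
      Real.log_le_sub_one_of_pos (by positivity)
    have heq : p * Real.log q - p * Real.log (p / py) = p * Real.log (q * py / p) := by
      rw [Real.log_div h.ne' hpy.ne', Real.log_div (by positivity) h.ne',
          Real.log_mul hq'.ne' hpy.ne']
      ring
    rw [heq]
    calc p * Real.log (q * py / p) ≤ p * (q * py / p - 1) :=
          mul_le_mul_of_nonneg_left key hp
      _ = q * py - p := by field_simp

/-- **Variational information maximization bound (Theorem 2, Barber–Agakov bound).**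
For any conditional pmf `q : 𝒳 × 𝒴 → [0,1]` (i.e. `∑ₓ q x y = 1` for every `y`)
with `q x y > 0` whenever `p(x,y) > 0`, one has
`I(X; Y) ≥ ∑_{x,y} p(x,y) log q(x|y) + H(X)`. -/
theorem barber_agakov_bound
    {Ω 𝒳 𝒴 : Type*} [MeasurableSpace Ω]
    [MeasurableSpace 𝒳] [MeasurableSingletonClass 𝒳]
    [MeasurableSpace 𝒴] [MeasurableSingletonClass 𝒴]
    [Fintype 𝒳] [Fintype 𝒴] [Nonempty 𝒳] [Nonempty 𝒴]
    (μ : Measure Ω) [IsProbabilityMeasure μ]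
    (X : Ω → 𝒳) (Y : Ω → 𝒴) (hX : Measurable X) (hY : Measurable Y)
    (q : 𝒳 → 𝒴 → ℝ)
    (hq0 : ∀ x y, 0 ≤ q x y) (hq1 : ∀ x y, q x y ≤ 1)
    (hqsum : ∀ y, ∑ x, q x y = 1)
    (hqpos : ∀ x y, 0 < jpr μ X Y x y → 0 < q x y) :
    (∑ x, ∑ y, jpr μ X Y x y * Real.log (q x y)) + entropy μ X ≤ mutualInfo μ X Y := by
  
  -- key measure fact: ∑ x, jpr x y = pr Y y
  have hsum : ∀ y : 𝒴, ∑ x, jpr μ X Y x y = pr μ Y y := by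
    intro y
    have hdisj : ((Finset.univ : Finset 𝒳) : Set 𝒳).PairwiseDisjoint
        (fun x => {ω | X ω = x ∧ Y ω = y}) := by
      intro a _ b _ hab
      refine Set.disjoint_left.mpr ?_
      rintro ω ⟨rfl, -⟩ ⟨rfl, -⟩
      exact hab rfl
    have hmeas : ∀ x ∈ (Finset.univ : Finset 𝒳),
        MeasurableSet {ω | X ω = x ∧ Y ω = y} := by
      intro x _
      have : {ω | X ω = x ∧ Y ω = y} = X ⁻¹' {x} ∩ Y ⁻¹' {y} := by
        ext ω; simp [Set.mem_preimage]
      rw [this]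
      exact (hX (measurableSet_singleton x)).inter (hY (measurableSet_singleton y))
    have hunion : (⋃ x ∈ (Finset.univ : Finset 𝒳), {ω | X ω = x ∧ Y ω = y})
        = {ω | Y ω = y} := by
      ext ω; simp
    have := measure_biUnion_finset (μ := μ) hdisj hmeas
    rw [hunion] at this
    simp only [jpr, pr, this]
    rw [ENNReal.toReal_sum (fun x _ => measure_ne_top μ _)]
  have hjpr_nonneg : ∀ x y, 0 ≤ jpr μ X Y x y := fun x y => ENNReal.toReal_nonneg
  have hjpr_le : ∀ x y, jpr μ X Y x y ≤ pr μ Y y := by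
    intro x y
    rw [jpr, pr]
    exact ENNReal.toReal_mono (measure_ne_top μ _)
      (measure_mono (fun ω h => h.2))
  -- suffices: ∑∑ p log q ≤ ∑∑ p log (p/py)
  rw [mutualInfo, condEntropy]
  have main : (∑ x, ∑ y, jpr μ X Y x y * Real.log (q x y))
      ≤ ∑ x, ∑ y, jpr μ X Y x y * Real.log (jpr μ X Y x y / pr μ Y y) := by
    have hdiff : (∑ x, ∑ y, (jpr μ X Y x y * Real.log (q x y)
        - jpr μ X Y x y * Real.log (jpr μ X Y x y / pr μ Y y))) ≤ 0 := by
      have hle : (∑ x, ∑ y, (jpr μ X Y x y * Real.log (q x y)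
          - jpr μ X Y x y * Real.log (jpr μ X Y x y / pr μ Y y)))
          ≤ ∑ x, ∑ y, (q x y * pr μ Y y - jpr μ X Y x y) := by
        refine Finset.sum_le_sum fun x _ => Finset.sum_le_sum fun y _ => ?_
        exact barber_log_aux (hjpr_nonneg x y) (hjpr_le x y) (hq0 x y) (hqpos x y)
      refine hle.trans (le_of_eq ?_)
      rw [Finset.sum_comm]
      have : ∀ y : 𝒴, (∑ x, (q x y * pr μ Y y - jpr μ X Y x y)) = 0 := by
        intro y
        rw [Finset.sum_sub_distrib, hsum y, ← Finset.sum_mul, hqsum y, one_mul, sub_self]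
      simp [this]
    have hsplit : (∑ x, ∑ y, (jpr μ X Y x y * Real.log (q x y)
        - jpr μ X Y x y * Real.log (jpr μ X Y x y / pr μ Y y)))
        = (∑ x, ∑ y, jpr μ X Y x y * Real.log (q x y))
          - ∑ x, ∑ y, jpr μ X Y x y * Real.log (jpr μ X Y x y / pr μ Y y) := by
      simp [Finset.sum_sub_distrib]
    linarith [hsplit ▸ hdiff]
  linarith [main]
end

section
/- Tightness of the variational bound: Let X and Y be random variables taking values in finite nonempty sets with joint pmf p(x, y). Choosing the variational conditional distribution equal to the true posterior, q(x | y) = P(X = x | Y = y) for all y with P(Y = y) > 0, achieves equality in the Barber–Agakov bound: Σ_{x,y} p(x, y) log q(x | y) + H(X) = I(X; Y). Consequently, the supremum of Σ_{x,y} p(x, y) log q(x | y) + H(X) over all conditional pmfs q with q(x | y) > 0 whenever p(x, y) > 0 equals I(X; Y). -/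
open MeasureTheory

section BAaux

set_option linter.unusedSectionVars false

variable {Ω 𝒳 𝒴 : Type*} [MeasurableSpace Ω]
    [MeasurableSpace 𝒳] [MeasurableSingletonClass 𝒳]
    [MeasurableSpace 𝒴] [MeasurableSingletonClass 𝒴]
    [Fintype 𝒳] [Fintype 𝒴]
    (μ : Measure Ω) [IsProbabilityMeasure μ]
    (X : Ω → 𝒳) (Y : Ω → 𝒴)

lemma BA_jpr_nonneg (x : 𝒳) (y : 𝒴) : 0 ≤ jpr μ X Y x y := ENNReal.toReal_nonneg

lemma BA_pr_nonneg (y : 𝒴) : 0 ≤ pr μ Y y := ENNReal.toReal_nonneg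

lemma BA_jpr_le_pr (x : 𝒳) (y : 𝒴) : jpr μ X Y x y ≤ pr μ Y y := by
  apply ENNReal.toReal_mono (measure_ne_top _ _)
  exact measure_mono (fun ω h => h.2)

lemma BA_sum_jpr (hX : Measurable X) (hY : Measurable Y) (y : 𝒴) :
    ∑ x, jpr μ X Y x y = pr μ Y y := by
  unfold jpr pr
  rw [← ENNReal.toReal_sum (fun _ _ => measure_ne_top _ _)]
  congr 1
  rw [← measure_biUnion_finset]
  · congr 1
    ext ω
    simp
  · intro a _ b _ hab
    intro s hsa hsb ω hω
    exact absurd ((hsa hω).1.symm.trans (hsb hω).1) hab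
  · intro x _
    exact (hX (measurableSet_singleton x)).inter (hY (measurableSet_singleton y))

lemma BA_gibbs_term (a b c : ℝ) (ha : 0 ≤ a) (hac : a ≤ c) (hb : 0 ≤ b)
    (hpos : 0 < a → 0 < b) :
    a * Real.log b - a * Real.log (a / c) ≤ b * c - a := by
  rcases eq_or_lt_of_le ha with h0 | h0
  · rw [← h0]
    simpa using mul_nonneg hb (h0.le.trans hac)
  · have hc : 0 < c := lt_of_lt_of_le h0 hac
    have hbp : 0 < b := hpos h0
    have key : Real.log (b * c / a) ≤ b * c / a - 1 :=
      Real.log_le_sub_one_of_pos (by positivity)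
    have hlog : Real.log b - Real.log (a / c) = Real.log (b * c / a) := by
      rw [Real.log_div (by positivity) hc.ne', Real.log_div (by positivity) h0.ne',
        Real.log_mul hbp.ne' hc.ne']
      ring
    calc a * Real.log b - a * Real.log (a / c) = a * Real.log (b * c / a) := by
          rw [← mul_sub, hlog]
      _ ≤ a * (b * c / a - 1) := mul_le_mul_of_nonneg_left key h0.le
      _ = b * c - a := by field_simp

/-- The exact-posterior sum equals minus the conditional entropy. -/
lemma BA_eq_part (q : 𝒳 → 𝒴 → ℝ)
    (hq : ∀ x y, 0 < pr μ Y y → q x y = jpr μ X Y x y / pr μ Y y) :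
    (∑ x, ∑ y, jpr μ X Y x y * Real.log (q x y)) = -condEntropy μ X Y := by
  rw [condEntropy, neg_neg]
  refine Finset.sum_congr rfl fun x _ => Finset.sum_congr rfl fun y _ => ?_
  rcases lt_or_eq_of_le (BA_pr_nonneg μ Y y) with hpy | hpy
  · rw [hq x y hpy]
  · have : jpr μ X Y x y = 0 :=
      le_antisymm (hpy ▸ BA_jpr_le_pr μ X Y x y) (BA_jpr_nonneg μ X Y x y)
    simp [this]

/-- Gibbs' inequality: any admissible `q` gives a value at most the posterior's. -/
lemma BA_le_part (hX : Measurable X) (hY : Measurable Y) (q : 𝒳 → 𝒴 → ℝ)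
    (hq0 : ∀ x y, 0 ≤ q x y) (hq1 : ∀ y, ∑ x, q x y = 1)
    (hqp : ∀ x y, 0 < jpr μ X Y x y → 0 < q x y) :
    (∑ x, ∑ y, jpr μ X Y x y * Real.log (q x y)) ≤ -condEntropy μ X Y := by
  rw [condEntropy, neg_neg, ← sub_nonpos, ← Finset.sum_sub_distrib]
  have : ∀ x ∈ Finset.univ, ((∑ y, jpr μ X Y x y * Real.log (q x y)) -
      ∑ y, jpr μ X Y x y * Real.log (jpr μ X Y x y / pr μ Y y)) =
      ∑ y, (jpr μ X Y x y * Real.log (q x y) -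
        jpr μ X Y x y * Real.log (jpr μ X Y x y / pr μ Y y)) := by
    intro x _
    rw [Finset.sum_sub_distrib]
  rw [Finset.sum_congr rfl this, Finset.sum_comm]
  have key : ∀ y : 𝒴, (∑ x, (jpr μ X Y x y * Real.log (q x y) -
      jpr μ X Y x y * Real.log (jpr μ X Y x y / pr μ Y y))) ≤ 0 := by
    intro y
    have h1 : (∑ x, (jpr μ X Y x y * Real.log (q x y) -
        jpr μ X Y x y * Real.log (jpr μ X Y x y / pr μ Y y))) ≤
        ∑ x, (q x y * pr μ Y y - jpr μ X Y x y) := by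
      refine Finset.sum_le_sum fun x _ => ?_
      exact BA_gibbs_term _ _ _ (BA_jpr_nonneg μ X Y x y) (BA_jpr_le_pr μ X Y x y)
        (hq0 x y) (hqp x y)
    refine h1.trans ?_
    rw [Finset.sum_sub_distrib, ← Finset.sum_mul, hq1 y, one_mul,
      BA_sum_jpr μ X Y hX hY y, sub_self]
  exact Finset.sum_nonpos fun y _ => key y

end BAaux

/-- **Tightness of the variational (Barber–Agakov) bound.**
Choosing the variational conditional distribution equal to the true posterior,
`q x y = P(X = x | Y = y)` for all `y` with `P(Y = y) > 0`, achieves equality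
`∑_{x,y} p(x,y) log q(x|y) + H(X) = I(X; Y)`; consequently, the supremum of
`∑_{x,y} p(x,y) log q(x|y) + H(X)` over all admissible conditional pmfs `q`
equals `I(X; Y)`. -/
theorem barber_agakov_tight
    {Ω 𝒳 𝒴 : Type*} [MeasurableSpace Ω]
    [MeasurableSpace 𝒳] [MeasurableSingletonClass 𝒳]
    [MeasurableSpace 𝒴] [MeasurableSingletonClass 𝒴]
    [Fintype 𝒳] [Fintype 𝒴] [Nonempty 𝒳] [Nonempty 𝒴]
    (μ : Measure Ω) [IsProbabilityMeasure μ]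
    (X : Ω → 𝒳) (Y : Ω → 𝒴) (hX : Measurable X) (hY : Measurable Y) :
    (∀ q : 𝒳 → 𝒴 → ℝ,
        (∀ x y, 0 < pr μ Y y → q x y = jpr μ X Y x y / pr μ Y y) →
        (∑ x, ∑ y, jpr μ X Y x y * Real.log (q x y)) + entropy μ X = mutualInfo μ X Y) ∧
    IsLUB {v : ℝ | ∃ q : 𝒳 → 𝒴 → ℝ,
        (∀ x y, 0 ≤ q x y) ∧ (∀ y, ∑ x, q x y = 1) ∧
        (∀ x y, 0 < jpr μ X Y x y → 0 < q x y) ∧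
        v = (∑ x, ∑ y, jpr μ X Y x y * Real.log (q x y)) + entropy μ X}
      (mutualInfo μ X Y) := by
  have heq : ∀ q : 𝒳 → 𝒴 → ℝ,
      (∀ x y, 0 < pr μ Y y → q x y = jpr μ X Y x y / pr μ Y y) →
      (∑ x, ∑ y, jpr μ X Y x y * Real.log (q x y)) + entropy μ X = mutualInfo μ X Y := by
    intro q hq
    rw [BA_eq_part μ X Y q hq, mutualInfo]
    ring
  refine ⟨heq, ?_, ?_⟩
  · -- upper bound
    rintro v ⟨q, hq0, hq1, hqp, rfl⟩
    have := BA_le_part μ X Y hX hY q hq0 hq1 hqp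
    rw [mutualInfo]
    linarith
  · -- least upper bound: mutualInfo is in the set
    intro b hb
    refine hb ?_
    classical
    refine ⟨fun x y => if 0 < pr μ Y y then jpr μ X Y x y / pr μ Y y
      else (Fintype.card 𝒳 : ℝ)⁻¹, ?_, ?_, ?_, ?_⟩
    · intro x y
      by_cases h : 0 < pr μ Y y
      · simp only [if_pos h]
        exact div_nonneg (BA_jpr_nonneg μ X Y x y) h.le
      · simp only [if_neg h]
        positivity
    · intro y
      by_cases h : 0 < pr μ Y y
      · simp only [if_pos h]
        rw [← Finset.sum_div, BA_sum_jpr μ X Y hX hY y, div_self h.ne']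
      · simp only [if_neg h, Finset.sum_const, Finset.card_univ, nsmul_eq_mul]
        rw [mul_inv_cancel₀]
        exact_mod_cast Fintype.card_ne_zero
    · intro x y hj
      have hpy : 0 < pr μ Y y := lt_of_lt_of_le hj (BA_jpr_le_pr μ X Y x y)
      simp only [if_pos hpy]
      exact div_pos hj hpy
    · rw [heq _ (fun x y h => if_pos h)]
end
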